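/- arXiv:1504.05172 — 2 statements merged into one kernel-verified Lean document; each statement's English description precedes it below -/
import Mathlib

section
/- The orbit of H in Y is quasiconvex: there exists K ≥ 0 such that for all x, y ∈ H and every d_Y-geodesic p_0 = x, p_1, …, p_k = y from x to y, each p_i satisfies d_Y(p_i, h) ≤ K for some h ∈ H. -/
open FreeGroup Filter

namespace PurelyLox

abbrev F : Type := FreeGroup (Fin 3)

def a : F := FreeGroup.of 0
def b : F := FreeGroup.of 1
def c : F := FreeGroup.of 2

/-- The subgroup generated by `a` and `b`. -/
def H : Subgroup F := Subgroup.closure {a, b}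

/-- `g` is a positive word in the generators `a` and `b`. -/
def PosAB (g : F) : Prop :=
  ∀ x ∈ g.toWord, x.2 = true ∧ x.1 ≠ 2

/-- A word is 7-aperiodic: it contains no subword `u^7` with `u` nonempty. -/
def Aperiodic7 {β : Type*} (w : List β) : Prop :=
  ¬ ∃ u : List β, u ≠ [] ∧ (List.flatten (List.replicate 7 u)) <:+: w

/-- The data of the fixed sequence `(v n)` of positive 7-aperiodic words in `a,b`,
with pairwise distinct lengths tending to infinity. -/
structure VSeq where
  v : ℕ → F
  pos : ∀ n, PosAB (v n)
  len_ne : ∀ m n, m ≠ n → ((v m).toWord.length ≠ (v n).toWord.length)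
  len_tendsto : Tendsto (fun n => (v n).toWord.length) atTop atTop
  aperiodic : ∀ n, Aperiodic7 (v n).toWord

/-- `w n = v n * c`. -/
def VSeq.w (V : VSeq) (n : ℕ) : F := V.v n * c

/-- `z` is a `W`-word: nontrivial, and its reduced word is a subword of
the reduced word of `(w n)^m` for some `n` and some `m ≠ 0`. -/
def VSeq.IsW (V : VSeq) (z : F) : Prop :=
  z ≠ 1 ∧ ∃ (n : ℕ) (m : ℤ), m ≠ 0 ∧ z.toWord <:+: ((V.w n) ^ m).toWord

/-- `|g|_Y`: the least `k` such that `g` is a product of `k` `W`-words. -/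
noncomputable def VSeq.normY (V : VSeq) (g : F) : ℕ :=
  sInf {k | ∃ l : List F, l.length = k ∧ (∀ z ∈ l, V.IsW z) ∧ l.prod = g}

/-- The vertex distance in the graph `Y`. -/
noncomputable def VSeq.dY (V : VSeq) (x y : F) : ℕ := V.normY (x⁻¹ * y)

/-- The product `u * v` is without cancellation. -/
def NoCancel (u v : F) : Prop := (u * v).toWord = u.toWord ++ v.toWord

/-- `p 0, p 1, …, p k` is a `d_Y`-geodesic from `x` to `y`. -/
def VSeq.IsGeodesic (V : VSeq) (x y : F) (k : ℕ) (p : ℕ → F) : Prop :=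
  p 0 = x ∧ p k = y ∧ (∀ i < k, V.dY (p i) (p (i + 1)) = 1) ∧ k = V.dY x y

/-- `g` is cyclically reduced. -/
def CyclicallyReduced (g : F) : Prop := (g * g).toWord = g.toWord ++ g.toWord

/-- `g` is root-free. -/
def RootFree (g : F) : Prop := ∀ (x : F) (s : ℤ), 2 ≤ |s| → g ≠ x ^ s

/-!
Only two properties of the set of `W`-words matter: it is closed under inverses and under
passing to nonempty subwords of reduced words. Cut a geodesic from `x` to `y` at `p i`: then
`g₁ = x⁻¹ p i` and `g₂ = (p i)⁻¹ y` are products of `i` and `k - i` `W`-words, and the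
reduced words split as `g₁ = P Q`, `g₂ = Q⁻¹ T`, `x⁻¹ y = P T`. A subword of a product of
`n` `W`-words is a product of at most `n` `W`-words. Writing `g₁` as a concatenation of `i`
such subwords, either `Q` lies inside the last one, or `P` is a product of fewer than `i`
`W`-words and then `x⁻¹ y = P T` is a product of fewer than `k`, which is impossible. So
`p i` is at distance at most one from `x P`, and `x P ∈ H` because `P` is a prefix of the
word of `x⁻¹ y`, a word in `a` and `b` only.
-/
end PurelyLox

namespace FreeGroup

variable {α : Type*}

theorem mk_mem_closure_of_letters {B : Set α} :
    ∀ {L : List (α × Bool)}, (∀ x ∈ L, x.1 ∈ B) → mk L ∈ Subgroup.closure (of '' B)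
  | [], _ => by rw [← one_eq_mk]; exact one_mem _
  | (a, s) :: L, hL => by
    have hof : of a ∈ Subgroup.closure (of '' B) :=
      Subgroup.subset_closure ⟨a, hL _ List.mem_cons_self, rfl⟩
    have hhead : mk [(a, s)] ∈ Subgroup.closure (of '' B) := by
      cases s
      · rw [show mk [(a, false)] = (of a)⁻¹ by rw [of, inv_mk]; rfl]
        exact inv_mem hof
      · exact hof
    rw [← List.singleton_append, ← mul_mk]
    exact mul_mem hhead (mk_mem_closure_of_letters fun x hx => hL x (List.mem_cons_of_mem _ hx))

variable [DecidableEq α]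

theorem IsReduced.exists_reduce_append {u v : List (α × Bool)} (hu : IsReduced u)
    (hv : IsReduced v) :
    ∃ P Q T, u = P ++ Q ∧ v = invRev Q ++ T ∧ reduce (u ++ v) = P ++ T := by
  induction u with
  | nil => exact ⟨[], [], v, rfl, rfl, hv.reduce_eq⟩
  | cons x u ih =>
    obtain ⟨P, Q, T, rfl, rfl, hred⟩ := ih (List.IsChain.tail hu)
    by_cases hcancel : ∃ t rest, P ++ T = t :: rest ∧ x.1 = t.1 ∧ x.2 = !t.2
    · obtain ⟨t, rest, hPT, h1, h2⟩ := hcancel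
      obtain rfl : P = [] := by
        rcases P with _ | ⟨y, P⟩
        · rfl
        · obtain rfl : y = t := (List.cons_eq_cons.1 hPT).1
          have := (isReduced_cons_cons.1 hu).1 h1
          cases x.2 <;> simp_all
      obtain rfl : T = t :: rest := hPT
      refine ⟨[], x :: Q, rest, rfl, ?_, ?_⟩
      · have ht : t = (x.1, !x.2) := Prod.ext h1.symm (by simp [h2])
        simp [invRev, ht]
      · simp only [List.nil_append] at hred
        change reduce (x :: (Q ++ (invRev Q ++ t :: rest))) = rest
        rw [reduce.cons, hred]
        exact if_pos ⟨h1, h2⟩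
    · refine ⟨x :: P, Q, T, rfl, rfl, ?_⟩
      change reduce (x :: (P ++ Q ++ (invRev Q ++ T))) = x :: (P ++ T)
      rw [reduce.cons, hred]
      rcases hPT : P ++ T with _ | ⟨t, rest⟩
      · rfl
      · exact if_neg fun h => hcancel ⟨t, rest, hPT, h⟩

theorem exists_toWord_mul (x y : FreeGroup α) :
    ∃ P Q T, x.toWord = P ++ Q ∧ y.toWord = invRev Q ++ T ∧ (x * y).toWord = P ++ T := by
  rw [toWord_mul]
  exact IsReduced.exists_reduce_append isReduced_toWord isReduced_toWord

theorem toWord_mk_of_infix {t : List (α × Bool)} {x : FreeGroup α} (h : t <:+: x.toWord) :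
    (mk t).toWord = t := by
  rw [toWord_mk]
  exact (isReduced_toWord.infix h).reduce_eq

def letterSubgroup (B : Set α) : Subgroup (FreeGroup α) where
  carrier := {g | ∀ x ∈ g.toWord, x.1 ∈ B}
  one_mem' := by simp
  mul_mem' {g h} hg hh x hx :=
    (List.mem_append.1 ((toWord_mul_sublist g h).subset hx)).elim (hg x) (hh x)
  inv_mem' {g} hg x hx := by
    rw [toWord_inv, invRev, List.mem_reverse, List.mem_map] at hx
    obtain ⟨y, hy, rfl⟩ := hx
    exact hg y hy

theorem closure_image_of (B : Set α) : Subgroup.closure (of '' B) = letterSubgroup B := by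
  refine le_antisymm ?_ fun g hg => ?_
  · rw [Subgroup.closure_le]
    rintro _ ⟨a, ha, rfl⟩ x hx
    rw [toWord_of, List.mem_singleton] at hx
    exact hx ▸ ha
  · rw [← mk_toWord (x := g)]
    exact mk_mem_closure_of_letters hg

theorem mk_mem_letterSubgroup_of_infix {B : Set α} {t : List (α × Bool)} {g : FreeGroup α}
    (hg : g ∈ letterSubgroup B) (ht : t <:+: g.toWord) : mk t ∈ letterSubgroup B := by
  intro x hx
  rw [toWord_mk_of_infix ht] at hx
  exact hg x (ht.subset hx)

end FreeGroup

section ProdLE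

variable {G : Type*}

def IsProdLE [Monoid G] (S : Set G) (n : ℕ) (g : G) : Prop :=
  ∃ l : List G, l.length ≤ n ∧ (∀ z ∈ l, z ∈ S) ∧ l.prod = g

variable {S : Set G} {m n : ℕ} {g h : G}

theorem isProdLE_one [Monoid G] (n : ℕ) : IsProdLE S n 1 :=
  ⟨[], Nat.zero_le n, by simp, rfl⟩

theorem isProdLE_one_of_mem [Monoid G] (hg : g ∈ S) : IsProdLE S 1 g :=
  ⟨[g], le_rfl, by simpa using hg, List.prod_singleton⟩

theorem IsProdLE.mono [Monoid G] (hg : IsProdLE S m g) (hmn : m ≤ n) : IsProdLE S n g :=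
  let ⟨l, hl, hlS, hprod⟩ := hg
  ⟨l, hl.trans hmn, hlS, hprod⟩

theorem IsProdLE.mul [Monoid G] (hg : IsProdLE S m g) (hh : IsProdLE S n h) :
    IsProdLE S (m + n) (g * h) := by
  obtain ⟨l, hl, hlS, rfl⟩ := hg
  obtain ⟨l', hl', hlS', rfl⟩ := hh
  refine ⟨l ++ l', by simp; omega, fun z hz => ?_, List.prod_append⟩
  exact (List.mem_append.1 hz).elim (hlS z) (hlS' z)

theorem IsProdLE.inv [Group G] (hS : ∀ z ∈ S, z⁻¹ ∈ S) (hg : IsProdLE S n g) :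
    IsProdLE S n g⁻¹ := by
  obtain ⟨l, hl, hlS, rfl⟩ := hg
  refine ⟨(l.map (·⁻¹)).reverse, by simpa using hl, fun z hz => ?_,
    (List.prod_inv_reverse l).symm⟩
  obtain ⟨y, hy, rfl⟩ := List.mem_map.1 (List.mem_reverse.1 hz)
  exact hS y (hlS y hy)

theorem isProdLE_inv_mul_of_edges [Group G] {p : ℕ → G} {k i j : ℕ}
    (hedge : ∀ r < k, (p r)⁻¹ * p (r + 1) ∈ S) (hij : i ≤ j) (hjk : j ≤ k) :
    IsProdLE S (j - i) ((p i)⁻¹ * p j) := by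
  induction j, hij using Nat.le_induction with
  | base => simpa using isProdLE_one (S := S) 0
  | succ j hij ih =>
    have hstep := (ih (by omega)).mul (isProdLE_one_of_mem (hedge j (by omega)))
    rw [show j - i + 1 = j + 1 - i by omega, mul_assoc, mul_inv_cancel_left] at hstep
    exact hstep

end ProdLE

section InfixClosed

variable {α : Type*} [DecidableEq α] {S : Set (FreeGroup α)} {m n : ℕ} {g : FreeGroup α}

def IsInfixClosed (S : Set (FreeGroup α)) : Prop :=
  ∀ z ∈ S, ∀ t, t <:+: z.toWord → t ≠ [] → mk t ∈ S

theorem IsInfixClosed.isProdLE_one_mk (hS : IsInfixClosed S) {z : FreeGroup α}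
    {t : List (α × Bool)} (hz : z ∈ S) (ht : t <:+: z.toWord) : IsProdLE S 1 (mk t) := by
  rcases eq_or_ne t [] with rfl | hne
  · rw [← one_eq_mk]
    exact isProdLE_one 1
  · exact isProdLE_one_of_mem (hS z hz t ht hne)

theorem IsInfixClosed.isProdLE_mk_of_infix (hS : IsInfixClosed S) (hg : IsProdLE S n g)
    {t : List (α × Bool)} (ht : t <:+: g.toWord) : IsProdLE S n (mk t) := by
  obtain ⟨l, hl, hlS, rfl⟩ := hg
  refine IsProdLE.mono ?_ hl
  clear hl
  induction l using List.reverseRecOn generalizing t with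
  | nil =>
    rw [List.prod_nil, toWord_one, List.infix_nil] at ht
    rw [ht, ← one_eq_mk]
    exact isProdLE_one 0
  | append_singleton l z ih =>
    have hlS' : ∀ y ∈ l, y ∈ S := fun y hy => hlS y (List.mem_append_left _ hy)
    have hz : z ∈ S := hlS z (by simp)
    obtain ⟨P, Q, T, hPQ, hQT, hPT⟩ := exists_toWord_mul l.prod z
    have hP : P <:+: l.prod.toWord := hPQ ▸ List.infix_append_left
    have hT : T <:+: z.toWord := hQT ▸ List.infix_append_right
    rw [List.prod_append, List.prod_singleton, hPT] at ht
    rw [List.length_append, List.length_singleton]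
    rcases List.infix_append_iff.1 ht with ht | ht | ⟨t₁, t₂, rfl, ht₁, ht₂⟩
    · exact (ih hlS' (ht.trans hP)).mono (Nat.le_succ _)
    · exact (hS.isProdLE_one_mk hz (ht.trans hT)).mono (by omega)
    · rw [← mul_mk]
      exact (ih hlS' (ht₁.isInfix.trans hP)).mul (hS.isProdLE_one_mk hz (ht₂.isInfix.trans hT))

theorem IsInfixClosed.isProdLE_mk_left_or_right (hS : IsInfixClosed S) (hg : IsProdLE S (n + 1) g)
    {P Q : List (α × Bool)} (hPQ : g.toWord = P ++ Q) :
    IsProdLE S n (mk P) ∨ IsProdLE S 1 (mk Q) := by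
  obtain ⟨l, hl, hlS, rfl⟩ := hg
  rcases l.eq_nil_or_concat' with rfl | ⟨l, z, rfl⟩
  · rw [List.prod_nil, toWord_one, eq_comm, List.append_eq_nil_iff] at hPQ
    rw [hPQ.1, ← one_eq_mk]
    exact Or.inl (isProdLE_one n)
  have hz : z ∈ S := hlS z (by simp)
  obtain ⟨P', R, T, hP'R, hRT, hP'T⟩ := exists_toWord_mul l.prod z
  rw [List.prod_append, List.prod_singleton, hP'T, eq_comm, List.append_eq_append_iff] at hPQ
  rcases hPQ with ⟨X, rfl, -⟩ | ⟨X, -, rfl⟩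
  · have hl' : IsProdLE S n l.prod :=
      ⟨l, by simpa using hl, fun y hy => hlS y (List.mem_append_left _ hy), rfl⟩
    exact Or.inl (hS.isProdLE_mk_of_infix hl' (by rw [hP'R]; exact ⟨[], X ++ R, by simp⟩))
  · exact Or.inr (hS.isProdLE_one_mk hz (by rw [hRT]; exact ⟨invRev R ++ X, [], by simp⟩))

theorem IsInfixClosed.exists_prefix_isProdLE_one (hS : IsInfixClosed S)
    (hS_inv : ∀ z ∈ S, z⁻¹ ∈ S) {g₁ g₂ : FreeGroup α} (h₁ : IsProdLE S (m + 1) g₁)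
    (h₂ : IsProdLE S n g₂) (hmin : ∀ k, IsProdLE S k (g₁ * g₂) → m + 1 + n ≤ k) :
    ∃ P, P <+: (g₁ * g₂).toWord ∧ IsProdLE S 1 (g₁⁻¹ * mk P) := by
  obtain ⟨P, Q, T, hPQ, hQT, hPT⟩ := exists_toWord_mul g₁ g₂
  refine ⟨P, hPT ▸ List.prefix_append P T, ?_⟩
  have hg₁ : g₁ = mk P * mk Q := by rw [mul_mk, ← hPQ, mk_toWord]
  rcases hS.isProdLE_mk_left_or_right h₁ hPQ with hP | hQ
  · have hT : IsProdLE S n (mk T) := hS.isProdLE_mk_of_infix h₂ (hQT ▸ List.infix_append_right)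
    have hprod : mk P * mk T = g₁ * g₂ := by rw [mul_mk, ← hPT, mk_toWord]
    have := hmin _ (hprod ▸ hP.mul hT)
    omega
  · rw [hg₁, mul_inv_rev, inv_mul_cancel_right]
    exact hQ.inv hS_inv

theorem IsInfixClosed.exists_prefix_near_geodesic (hS : IsInfixClosed S)
    (hS_inv : ∀ z ∈ S, z⁻¹ ∈ S) {p : ℕ → FreeGroup α} {k : ℕ}
    (hedge : ∀ j < k, (p j)⁻¹ * p (j + 1) ∈ S)
    (hmin : ∀ n, IsProdLE S n ((p 0)⁻¹ * p k) → k ≤ n) {i : ℕ} (hi : i ≤ k) :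
    ∃ P, P <+: ((p 0)⁻¹ * p k).toWord ∧ IsProdLE S 1 ((p i)⁻¹ * (p 0 * mk P)) := by
  rcases i with _ | i
  · refine ⟨[], List.nil_prefix, ?_⟩
    rw [← one_eq_mk, mul_one, inv_mul_cancel]
    exact isProdLE_one 1
  have h₁ : IsProdLE S (i + 1) ((p 0)⁻¹ * p (i + 1)) :=
    isProdLE_inv_mul_of_edges hedge (Nat.zero_le _) hi
  have h₂ : IsProdLE S (k - (i + 1)) ((p (i + 1))⁻¹ * p k) :=
    isProdLE_inv_mul_of_edges hedge hi le_rfl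
  have hsplit : (p 0)⁻¹ * p (i + 1) * ((p (i + 1))⁻¹ * p k) = (p 0)⁻¹ * p k := by group
  obtain ⟨P, hP, hnear⟩ := hS.exists_prefix_isProdLE_one hS_inv h₁ h₂ fun n hn => by
    have := hmin n (hsplit ▸ hn)
    omega
  refine ⟨P, hsplit ▸ hP, ?_⟩
  convert hnear using 1
  group

end InfixClosed

namespace PurelyLox

theorem H_eq_letterSubgroup : H = letterSubgroup {0, 1} := by
  rw [H, ← closure_image_of, Set.image_pair]
  rfl

namespace VSeq

variable (V : VSeq)

theorem isInfixClosed_isW : IsInfixClosed {z | V.IsW z} := by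
  rintro z ⟨-, n, m, hm, hz⟩ t ht hne
  refine ⟨fun h => hne ?_, n, m, hm, by rw [toWord_mk_of_infix ht]; exact ht.trans hz⟩
  rw [← toWord_mk_of_infix ht, h, toWord_one]

theorem isW_inv {z : F} (hz : V.IsW z) : V.IsW z⁻¹ := by
  obtain ⟨hz, n, m, hm, hinf⟩ := hz
  refine ⟨inv_ne_one.2 hz, n, -m, neg_ne_zero.2 hm, ?_⟩
  rw [zpow_neg, toWord_inv, toWord_inv]
  obtain ⟨s, e, hse⟩ := hinf
  exact ⟨invRev e, invRev s, by rw [← hse, invRev_append, invRev_append, List.append_assoc]⟩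

theorem normY_le {n : ℕ} {g : F} (h : IsProdLE {z | V.IsW z} n g) : V.normY g ≤ n := by
  obtain ⟨l, hl, hlW, rfl⟩ := h
  exact (Nat.sInf_le (⟨l, rfl, hlW, rfl⟩ : ∃ l' : List F, _)).trans hl

theorem isW_of_dY_eq_one {x y : F} (h : V.dY x y = 1) : V.IsW (x⁻¹ * y) := by
  have hpos : 0 < V.normY (x⁻¹ * y) := by rw [← dY, h]; exact one_pos
  obtain ⟨l, hl, hlW, hprod⟩ := Nat.sInf_mem (Nat.nonempty_of_pos_sInf hpos)
  rw [← normY, ← dY, h, List.length_eq_one_iff] at hl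
  obtain ⟨z, rfl⟩ := hl
  rw [← hprod, List.prod_singleton]
  exact hlW z (List.mem_singleton_self z)

end VSeq

/-- The orbit of `H` in `Y` is quasiconvex. -/
theorem stmt4 (V : VSeq) :
    ∃ K : ℝ, 0 ≤ K ∧
      ∀ x y : F, x ∈ H → y ∈ H →
        ∀ (k : ℕ) (p : ℕ → F), V.IsGeodesic x y k p →
          ∀ i ≤ k, ∃ h : F, h ∈ H ∧ (V.dY (p i) h : ℝ) ≤ K := by
  refine ⟨1, zero_le_one, ?_⟩
  rintro x y hx hy k p ⟨rfl, rfl, hedge, hk⟩ i hi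
  obtain ⟨P, hP, hnear⟩ := V.isInfixClosed_isW.exists_prefix_near_geodesic (fun _ => V.isW_inv)
    (fun j hj => V.isW_of_dY_eq_one (hedge j hj)) (fun n hn => hk ▸ V.normY_le hn) hi
  rw [H_eq_letterSubgroup] at hx hy ⊢
  have hxy : (p 0)⁻¹ * p k ∈ letterSubgroup {0, 1} := mul_mem (inv_mem hx) hy
  refine ⟨p 0 * mk P, mul_mem hx (mk_mem_letterSubgroup_of_infix hxy hP.isInfix), ?_⟩
  exact_mod_cast V.normY_le hnear

end PurelyLox
end

section
/- The inclusion of H into (F, d_Y) is not a quasi-isometric embedding: there do not exist λ > 0 and c ≥ 0 such that for all g ∈ H one has ℓ_{a,b}(g) ≤ λ·|g|_Y + c, where ℓ_{a,b}(g) denotes the least k such that g is a product of k elements of {a, b, a⁻¹, b⁻¹}. -/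
open FreeGroup Filter

namespace PurelyLox

/-- The word length of `g` with respect to `{a, b, a⁻¹, b⁻¹}`. -/
noncomputable def lenAB (g : F) : ℕ :=
  sInf {k | ∃ l : List F, l.length = k ∧ (∀ z ∈ l, z = a ∨ z = b ∨ z = a⁻¹ ∨ z = b⁻¹) ∧
    l.prod = g}

/-! Each `v n` is a prefix of `w n`, hence a single `W`-word, so `|v n|_Y ≤ 1`; but its word
length in `a, b` is at least its reduced length, which tends to infinity. -/

end PurelyLox

namespace FreeGroup

variable {α : Type*}

theorem isReduced_of_forall_snd {L : List (α × Bool)} (h : ∀ p ∈ L, p.2 = true) :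
    IsReduced L :=
  (List.pairwise_of_forall_mem_list (r := fun p q : α × Bool => p.1 = q.1 → p.2 = q.2)
    fun p hp q hq _ => (h p hp).trans (h q hq).symm).isChain

variable [DecidableEq α]

theorem toWord_mul_of_forall_snd {x y : FreeGroup α} (hx : ∀ p ∈ x.toWord, p.2 = true)
    (hy : ∀ p ∈ y.toWord, p.2 = true) : (x * y).toWord = x.toWord ++ y.toWord := by
  rw [toWord_mul]
  refine (isReduced_of_forall_snd fun p hp => ?_).reduce_eq
  rcases List.mem_append.1 hp with hp | hp
  exacts [hx p hp, hy p hp]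

theorem norm_list_prod_le_length {l : List (FreeGroup α)} (h : ∀ z ∈ l, z.norm ≤ 1) :
    l.prod.norm ≤ l.length := by
  induction l with
  | nil => simp
  | cons z l ih =>
    rw [List.prod_cons, List.length_cons, add_comm]
    exact (norm_mul_le z l.prod).trans
      (add_le_add (h z List.mem_cons_self) (ih fun y hy => h y (List.mem_cons_of_mem z hy)))

theorem mem_closure_of_forall_mem_toWord {s : Set α} {g : FreeGroup α}
    (h : ∀ p ∈ g.toWord, p.1 ∈ s) : g ∈ Subgroup.closure (of '' s) := by
  rw [← lift_of_apply g, ← mk_toWord (x := g), lift_mk]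
  refine list_prod_mem fun y hy => ?_
  obtain ⟨p, hp, rfl⟩ := List.mem_map.1 hy
  have hof : of p.1 ∈ Subgroup.closure (of '' s) := Subgroup.subset_closure ⟨p.1, h p hp, rfl⟩
  cases p.2
  exacts [Subgroup.inv_mem _ hof, hof]

end FreeGroup

namespace PurelyLox

theorem mem_H_of_forall_mem_toWord {g : F} (h : ∀ p ∈ g.toWord, p.1 ≠ 2) : g ∈ H := by
  have hH : H = Subgroup.closure (of '' {0, 1}) := by rw [H, Set.image_pair]; rfl
  rw [hH]
  refine mem_closure_of_forall_mem_toWord fun p hp => ?_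
  have : p.1 = 0 ∨ p.1 = 1 := by have := h p hp; omega
  simpa using this

theorem norm_le_lenAB {g : F} (hg : g ∈ H) : g.norm ≤ lenAB g := by
  rw [H, ← Subgroup.mem_toSubmonoid, Subgroup.closure_toSubmonoid] at hg
  obtain ⟨l, hl, rfl⟩ := Submonoid.exists_list_of_mem_closure hg
  refine le_csInf ⟨l.length, l, rfl, fun z hz => ?_, rfl⟩ ?_
  · have := hl z hz
    simp only [Set.mem_union, Set.mem_inv, Set.mem_insert_iff, Set.mem_singleton_iff,
      inv_eq_iff_eq_inv] at this
    tauto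
  · rintro k ⟨l', rfl, hgen, hprod⟩
    rw [← hprod]
    refine norm_list_prod_le_length fun z hz => ?_
    rcases hgen z hz with rfl | rfl | rfl | rfl <;> simp [a, b]

namespace VSeq

variable (V : VSeq) (n : ℕ)

theorem v_mem_H : V.v n ∈ H :=
  mem_H_of_forall_mem_toWord fun p hp => (V.pos n p hp).2

theorem toWord_w : (V.w n).toWord = (V.v n).toWord ++ [(2, true)] := by
  rw [w, c, toWord_mul_of_forall_snd (fun p hp => (V.pos n p hp).1) (by simp), toWord_of]

theorem isW_v (hv : V.v n ≠ 1) : V.IsW (V.v n) :=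
  ⟨hv, n, 1, one_ne_zero, by rw [zpow_one, toWord_w]; exact (List.prefix_append _ _).isInfix⟩

theorem normY_le_one {z : F} (hz : V.IsW z) : V.normY z ≤ 1 :=
  Nat.sInf_le ⟨[z], rfl, by simpa using hz, List.prod_singleton⟩

end VSeq

/-- The inclusion of `H` into `(F, d_Y)` is not a quasi-isometric embedding. -/
theorem stmt6 (V : VSeq) :
    ¬ ∃ lam c : ℝ, 0 < lam ∧ 0 ≤ c ∧
        ∀ g : F, g ∈ H → (lenAB g : ℝ) ≤ lam * (V.normY g : ℝ) + c := by
  rintro ⟨lam, C, hlam, -, hqi⟩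
  obtain ⟨n, hn⟩ := (V.len_tendsto.eventually_gt_atTop ⌈lam + C⌉₊).exists
  have hv : V.v n ≠ 1 := fun h => by simp [h] at hn
  have hY : (V.normY (V.v n) : ℝ) ≤ 1 := by exact_mod_cast V.normY_le_one (V.isW_v n hv)
  have hqi_v : ((V.v n).norm : ℝ) ≤ lam * V.normY (V.v n) + C :=
    (Nat.cast_le.2 (norm_le_lenAB (V.v_mem_H n))).trans (hqi _ (V.v_mem_H n))
  have hlarge : lam + C < (V.v n).norm := Nat.lt_of_ceil_lt hn
  linarith [mul_le_of_le_one_right hlam.le hY]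

end PurelyLox
end
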